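/- arXiv:1401.4566 — 4 statements merged into one kernel-verified Lean document; each statement's English description precedes it below -/
import Mathlib

section
/- Let f : ℝ → ℝ be twice differentiable with f''(x) ≥ α (f'(x))² for all x in the interval [-R, R], where α, R > 0, and suppose |f'(x)| ≤ G on [-R, R]. Then with β = (1/2) min(α, 1/(4GR)), for all x, y ∈ [-R, R]: f(x) ≥ f(y) + f'(y)(x - y) + (β/2)(f'(y)(x - y))². -/
/-!
Put `γ = min α (1/(4GR)) = 2β` and `h = exp (-γ f)`. Since `γ ≤ α`, the hypothesis
`f'' ≥ α f'²` makes `h'' = γ h (γ f'² - f'') ≤ 0`, so `h` lies below its tangent at `y`: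
`exp (-γ f x) ≤ exp (-γ f y) (1 - γ z)` with `z = f'(y) (x - y)`. Taking logarithms,
`γ (f y - f x) ≤ log (1 - γ z)`, and `|γ z| ≤ 1/2` because `γ ≤ 1/(4GR)`, so the elementary
bound `log (1 - u) ≤ -u - u²/4` for `|u| < 1` finishes.
-/

open Real Set

lemma Real.log_one_sub_le_neg_sub_sq_div_four {u : ℝ} (hu : |u| < 1) :
    log (1 - u) ≤ -u - u ^ 2 / 4 := by
  set g : ℝ → ℝ := fun w => -log (1 - w) - w - w ^ 2 / 4
  have hg : ∀ w < 1, HasDerivAt g (w * (1 + w) / (2 * (1 - w))) w := by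
    intro w hw
    have hw' : 1 - w ≠ 0 := sub_ne_zero.2 hw.ne'
    have hlog := ((hasDerivAt_id' w).const_sub 1).log hw'
    refine ((hlog.neg.sub (hasDerivAt_id' w)).sub ((hasDerivAt_pow 2 w).div_const 4)).congr_deriv ?_
    field_simp
    ring
  have hdiff : DifferentiableOn ℝ g (Ioo (-1) 1) := fun w hw =>
    (hg w hw.2).differentiableAt.differentiableWithinAt
  have hmin : IsMinOn g (Ioo (-1) 1) 0 := by
    refine isMinOn_Ioo_of_deriv (hg 0 one_pos).continuousAt
      (hdiff.mono (Ioo_subset_Ioo_right zero_le_one))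
      (hdiff.mono (Ioo_subset_Ioo_left (by norm_num))) (fun w hw => ?_) (fun w hw => ?_)
    · rw [(hg w (hw.2.trans one_pos)).deriv]
      exact div_nonpos_of_nonpos_of_nonneg (by nlinarith [hw.1, hw.2]) (by linarith [hw.2])
    · rw [(hg w hw.2).deriv]
      exact div_nonneg (by nlinarith [hw.1]) (by linarith [hw.2])
  have h0u : g 0 ≤ g u := hmin (abs_lt.1 hu)
  norm_num [g] at h0u
  linarith

lemma ConcaveOn.le_add_deriv_mul_sub {S : Set ℝ} {h : ℝ → ℝ} (hc : ConcaveOn ℝ S h)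
    {x y : ℝ} (hx : x ∈ S) (hy : y ∈ S) (hd : DifferentiableAt ℝ h y) :
    h x ≤ h y + deriv h y * (x - y) := by
  rcases lt_trichotomy x y with hxy | rfl | hxy
  · have hs := hc.deriv_le_slope hx hy hxy hd
    rw [slope_def_field, le_div_iff₀ (by linarith)] at hs
    nlinarith
  · simp
  · have hs := hc.slope_le_deriv hy hx hxy hd
    rw [slope_def_field, div_le_iff₀ (by linarith)] at hs
    nlinarith

section ExpConcave

variable {f : ℝ → ℝ} {γ : ℝ}

lemma hasDerivAt_exp_neg_mul {x : ℝ} (hf : DifferentiableAt ℝ f x) :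
    HasDerivAt (fun t => exp (-(γ * f t))) (-(γ * deriv f x) * exp (-(γ * f x))) x := by
  rw [mul_comm]
  exact (hf.hasDerivAt.const_mul γ).neg.exp

lemma concaveOn_exp_neg_mul {D : Set ℝ} (hD : Convex ℝ D) (hf : Differentiable ℝ f)
    (hf' : Differentiable ℝ (deriv f)) (hγ : 0 ≤ γ)
    (hsec : ∀ x ∈ interior D, γ * deriv f x ^ 2 ≤ deriv (deriv f) x) :
    ConcaveOn ℝ D (fun t => exp (-(γ * f t))) := by
  have hderiv :
      deriv (fun t => exp (-(γ * f t))) = fun t => -(γ * deriv f t) * exp (-(γ * f t)) :=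
    funext fun t => (hasDerivAt_exp_neg_mul (hf t)).deriv
  have hderiv2 : ∀ t, HasDerivAt (fun t => -(γ * deriv f t) * exp (-(γ * f t)))
      (-(γ * deriv (deriv f) t) * exp (-(γ * f t))
        + -(γ * deriv f t) * (-(γ * deriv f t) * exp (-(γ * f t)))) t := fun t =>
    ((hf' t).hasDerivAt.const_mul γ).neg.mul (hasDerivAt_exp_neg_mul (hf t))
  refine concaveOn_of_deriv2_nonpos hD ?_ ?_ ?_ fun t ht => ?_
  · exact (continuous_exp.comp ((hf.continuous.const_mul γ).neg)).continuousOn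
  · exact fun t _ => (hasDerivAt_exp_neg_mul (hf t)).differentiableAt.differentiableWithinAt
  · rw [hderiv]
    exact fun t _ => (hderiv2 t).differentiableAt.differentiableWithinAt
  · rw [Function.iterate_succ_apply, Function.iterate_one, hderiv, (hderiv2 t).deriv]
    have hE := exp_pos (-(γ * f t))
    have := mul_le_mul_of_nonneg_left (hsec t ht) (mul_nonneg hγ hE.le)
    nlinarith

lemma add_deriv_mul_add_sq_le_of_concaveOn_exp_neg_mul {S : Set ℝ} (hγ : 0 < γ)
    (hconc : ConcaveOn ℝ S (fun t => exp (-(γ * f t)))) {x y : ℝ} (hx : x ∈ S) (hy : y ∈ S)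
    (hfy : DifferentiableAt ℝ f y) (hz : |γ * (deriv f y * (x - y))| < 1) :
    f y + deriv f y * (x - y) + γ / 4 * (deriv f y * (x - y)) ^ 2 ≤ f x := by
  set z := deriv f y * (x - y)
  have htan : exp (-(γ * f x)) ≤ exp (-(γ * f y)) * (1 - γ * z) := by
    have := hconc.le_add_deriv_mul_sub hx hy (hasDerivAt_exp_neg_mul hfy).differentiableAt
    rw [(hasDerivAt_exp_neg_mul hfy).deriv] at this
    linarith
  have hpos : 0 < 1 - γ * z := by linarith [(abs_lt.1 hz).2]
  have hlog : γ * (f y - f x) ≤ log (1 - γ * z) := by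
    rw [le_log_iff_exp_le hpos]
    calc exp (γ * (f y - f x)) = exp (-(γ * f x)) / exp (-(γ * f y)) := by
          rw [← exp_sub]; ring_nf
      _ ≤ 1 - γ * z := by rwa [div_le_iff₀' (exp_pos _)]
  have := hlog.trans (log_one_sub_le_neg_sub_sq_div_four hz)
  nlinarith

end ExpConcave

theorem exp_concave_key_property
    (f : ℝ → ℝ) (α G R : ℝ) (hα : 0 < α) (hG : 0 < G) (hR : 0 < R)
    (hf : Differentiable ℝ f) (hf' : Differentiable ℝ (deriv f))
    (hsec : ∀ x ∈ Set.Icc (-R) R, α * (deriv f x) ^ 2 ≤ deriv (deriv f) x)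
    (hlip : ∀ x ∈ Set.Icc (-R) R, |deriv f x| ≤ G) :
    ∀ x ∈ Set.Icc (-R) R, ∀ y ∈ Set.Icc (-R) R,
      f y + deriv f y * (x - y)
        + (1 / 2 * min α (1 / (4 * G * R))) / 2 * (deriv f y * (x - y)) ^ 2 ≤ f x := by
  intro x hx y hy
  set γ := min α (1 / (4 * G * R))
  have hγ : 0 < γ := lt_min hα (by positivity)
  have hconc : ConcaveOn ℝ (Icc (-R) R) (fun t => exp (-(γ * f t))) :=
    concaveOn_exp_neg_mul (convex_Icc _ _) hf hf' hγ.le fun t ht =>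
      (mul_le_mul_of_nonneg_right (min_le_left _ _) (sq_nonneg _)).trans
        (hsec t (interior_subset ht))
  have hz : |γ * (deriv f y * (x - y))| < 1 := by
    have hxy : |x - y| ≤ 2 * R :=
      abs_sub_le_iff.2 ⟨by linarith [hx.2, hy.1], by linarith [hx.1, hy.2]⟩
    calc |γ * (deriv f y * (x - y))| = γ * (|deriv f y| * |x - y|) := by
          rw [abs_mul, abs_mul, abs_of_pos hγ]
      _ ≤ 1 / (4 * G * R) * (G * (2 * R)) :=
          mul_le_mul (min_le_right _ _) (mul_le_mul (hlip y hy) hxy (abs_nonneg _) hG.le)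
            (by positivity) (by positivity)
      _ < 1 := by field_simp; norm_num
  convert add_deriv_mul_add_sq_le_of_concaveOn_exp_neg_mul hγ hconc hx hy (hf y) hz using 3
  ring
end

section
/- Let (Ω, P) be a probability space, x : Ω → ℝᵈ a bounded random vector, y : Ω → {-1,1}, and ℓ : ℝ → ℝ differentiable convex with ℓ'(0) > 0. Suppose there is q > 0 with P(y = 1 | x) ≥ q and P(y = -1 | x) ≥ q almost surely. Then for every w ∈ ℝᵈ, E[(ℓ'(y ⟨w, x⟩))² x xᵀ] ⪰ q (ℓ'(0))² E[x xᵀ] in the positive-semidefinite (Loewner) order. -/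
open MeasureTheory RealInnerProductSpace

/-! Split the integral according to the label: on `{y = 1}` the integrand is
`ℓ'(⟪w, x⟫)² ⟪v, x⟫²`, on `{y = -1}` it is `ℓ'(-⟪w, x⟫)² ⟪v, x⟫²`. Both are `σ(x)`-measurable,
so pulling them out of the conditional expectation shows that each restricted integral is at least
`q` times the full one. Since `ℓ'` is monotone with `ℓ'(0) ≥ 0`, one of `ℓ'(±⟪w, x⟫)²` is at least
`ℓ'(0)²` pointwise. -/

theorem mul_integral_le_setIntegral_of_le_condExp_indicator {Ω : Type*} {m m₀ : MeasurableSpace Ω}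
    {μ : Measure Ω} [IsFiniteMeasure μ] (hm : m ≤ m₀) {h : Ω → ℝ} {A : Set Ω} {q : ℝ}
    (hh : StronglyMeasurable[m] h) (hint : Integrable h μ) (hh₀ : 0 ≤ᵐ[μ] h)
    (hA : MeasurableSet A) (hcond : ∀ᵐ ω ∂μ, q ≤ (μ[A.indicator (fun _ => (1 : ℝ)) | m]) ω) :
    q * ∫ ω, h ω ∂μ ≤ ∫ ω in A, h ω ∂μ := by
  set iA := A.indicator (fun _ => (1 : ℝ))
  have hiA : Integrable iA μ := (integrable_const 1).indicator hA
  have hhiA : h * iA = A.indicator h := by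
    ext ω
    by_cases hω : ω ∈ A <;> simp [iA, hω]
  have hpull : μ[h * iA | m] =ᵐ[μ] h * μ[iA | m] :=
    condExp_mul_of_stronglyMeasurable_left hh (hhiA ▸ hint.indicator hA) hiA
  calc q * ∫ ω, h ω ∂μ = ∫ ω, q * h ω ∂μ := (integral_const_mul q h).symm
    _ ≤ ∫ ω, (h * μ[iA | m]) ω ∂μ := by
      refine integral_mono_ae (hint.const_mul q) (integrable_condExp.congr hpull) ?_
      filter_upwards [hcond, hh₀] with ω hω hω₀
      simpa [mul_comm] using mul_le_mul_of_nonneg_left hω hω₀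
    _ = ∫ ω, (h * iA) ω ∂μ := by rw [← integral_congr_ae hpull, integral_condExp hm]
    _ = ∫ ω in A, h ω ∂μ := by rw [hhiA, integral_indicator hA]

theorem integral_eq_setIntegral_add_setIntegral_of_two_valued {Ω β E : Type*}
    [MeasurableSpace Ω] {μ : Measure Ω} [MeasurableSpace β] [MeasurableSingletonClass β]
    [NormedAddCommGroup E] [NormedSpace ℝ E] {y : Ω → β} {a b : β} (hy : Measurable y)
    (hab : a ≠ b) (hy₂ : ∀ ω, y ω = a ∨ y ω = b) {F : β → Ω → E}
    (hFa : Integrable (F a) μ) (hFb : Integrable (F b) μ) :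
    ∫ ω, F (y ω) ω ∂μ = ∫ ω in {ω | y ω = a}, F a ω ∂μ + ∫ ω in {ω | y ω = b}, F b ω ∂μ := by
  have hA : MeasurableSet {ω | y ω = a} := hy (measurableSet_singleton a)
  have hB : MeasurableSet {ω | y ω = b} := hy (measurableSet_singleton b)
  have hAF : Set.EqOn (fun ω => F (y ω) ω) (F a) {ω | y ω = a} :=
    fun ω (hω : y ω = a) => congrArg (F · ω) hω
  have hBF : Set.EqOn (fun ω => F (y ω) ω) (F b) {ω | y ω = b} :=
    fun ω (hω : y ω = b) => congrArg (F · ω) hω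
  have hunion : {ω | y ω = a} ∪ {ω | y ω = b} = Set.univ :=
    Set.eq_univ_of_forall hy₂
  have hdisj : Disjoint {ω | y ω = a} {ω | y ω = b} :=
    Set.disjoint_left.mpr fun ω hωa hωb => hab (hωa.symm.trans hωb)
  rw [← setIntegral_univ, ← hunion,
    setIntegral_union hdisj hB (hFa.integrableOn.congr_fun hAF.symm hA)
      (hFb.integrableOn.congr_fun hBF.symm hB),
    setIntegral_congr_fun hA hAF, setIntegral_congr_fun hB hBF]
theorem Monotone.sq_apply_zero_le_sq_add_sq_apply_neg {α β : Type*} [AddCommGroup α]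
    [LinearOrder α] [IsOrderedAddMonoid α] [Ring β] [LinearOrder β] [IsStrictOrderedRing β]
    {φ : α → β} (hφ : Monotone φ) (h₀ : 0 ≤ φ 0) (c : α) :
    φ 0 ^ 2 ≤ φ c ^ 2 + φ (-c) ^ 2 := by
  rcases le_total 0 c with hc | hc
  · exact le_add_of_le_of_nonneg (pow_le_pow_left₀ h₀ (hφ hc) 2) (sq_nonneg _)
  · exact le_add_of_nonneg_of_le (sq_nonneg _) (pow_le_pow_left₀ h₀ (hφ (neg_nonneg.mpr hc)) 2)

theorem Monotone.integrable_sq_comp_mul_sq {Ω : Type*} [MeasurableSpace Ω] {μ : Measure Ω}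
    [IsFiniteMeasure μ] {φ : ℝ → ℝ} (hφ : Monotone φ) {f g : Ω → ℝ} {M N : ℝ}
    (hf : Measurable f) (hg : Measurable g) (hfM : ∀ ω, |f ω| ≤ M) (hgN : ∀ ω, |g ω| ≤ N) :
    Integrable (fun ω => φ (f ω) ^ 2 * g ω ^ 2) μ := by
  refine .of_bound (((hφ.measurable.comp hf).pow_const 2).mul (hg.pow_const 2)).aestronglyMeasurable
    (max |φ (-M)| |φ M| ^ 2 * N ^ 2) (.of_forall fun ω => ?_)
  have hφf : |φ (f ω)| ≤ max |φ (-M)| |φ M| :=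
    abs_le_max_abs_abs (hφ (neg_le_of_abs_le (hfM ω))) (hφ (le_of_abs_le (hfM ω)))
  rw [Real.norm_eq_abs, abs_mul, abs_pow, abs_pow]
  gcongr
  exact hgN ω

theorem assumption_holds_under_label_noise
    {Ω : Type*} [MeasurableSpace Ω] (P : Measure Ω) [IsProbabilityMeasure P]
    {d : ℕ} (x : Ω → EuclideanSpace ℝ (Fin d)) (y : Ω → ℝ)
    (hx : Measurable x) (hy : Measurable y)
    (C : ℝ) (hxb : ∀ ω, ‖x ω‖ ≤ C)
    (hy1 : ∀ ω, y ω = 1 ∨ y ω = -1)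
    (ℓ : ℝ → ℝ) (hdiff : Differentiable ℝ ℓ) (hconv : ConvexOn ℝ Set.univ ℓ)
    (hl0 : 0 < deriv ℓ 0)
    (q : ℝ) (hq : 0 < q)
    (h1 : ∀ᵐ ω ∂P, q ≤
      (P[Set.indicator {ω' | y ω' = 1} (fun _ => (1 : ℝ)) |
        MeasurableSpace.comap x inferInstance]) ω)
    (h2 : ∀ᵐ ω ∂P, q ≤
      (P[Set.indicator {ω' | y ω' = -1} (fun _ => (1 : ℝ)) |
        MeasurableSpace.comap x inferInstance]) ω) :
    ∀ w v : EuclideanSpace ℝ (Fin d),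
      q * (deriv ℓ 0) ^ 2 * ∫ ω, ⟪v, x ω⟫ ^ 2 ∂P ≤
        ∫ ω, (deriv ℓ (y ω * ⟪w, x ω⟫)) ^ 2 * ⟪v, x ω⟫ ^ 2 ∂P := by
  intro w v
  have hxmx : Measurable[MeasurableSpace.comap x inferInstance] x := comap_measurable x
  have hmono : Monotone (deriv ℓ) :=
    monotoneOn_univ.mp (hconv.monotoneOn_deriv fun t _ => hdiff t)
  have hinner : ∀ u ω, |⟪u, x ω⟫| ≤ ‖u‖ * C := fun u ω =>
    (abs_real_inner_le_norm u (x ω)).trans (mul_le_mul_of_nonneg_left (hxb ω) (norm_nonneg u))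
  set F : ℝ → Ω → ℝ := fun s ω => deriv ℓ (s * ⟪w, x ω⟫) ^ 2 * ⟪v, x ω⟫ ^ 2
  have hFmx : ∀ s, Measurable[MeasurableSpace.comap x inferInstance] (F s) := fun s => by
    have := hmono.measurable
    fun_prop
  have hFint : ∀ s, Integrable (F s) P := fun s =>
    hmono.integrable_sq_comp_mul_sq (by fun_prop) (by fun_prop)
      (fun ω => (abs_mul _ _).trans_le (mul_le_mul_of_nonneg_left (hinner w ω) (abs_nonneg s)))
      (hinner v)
  have hpointwise : ∀ ω, deriv ℓ 0 ^ 2 * ⟪v, x ω⟫ ^ 2 ≤ F 1 ω + F (-1) ω := fun ω => by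
    simpa only [F, one_mul, neg_one_mul, ← add_mul] using mul_le_mul_of_nonneg_right
      (hmono.sq_apply_zero_le_sq_add_sq_apply_neg hl0.le ⟪w, x ω⟫) (sq_nonneg ⟪v, x ω⟫)
  calc q * deriv ℓ 0 ^ 2 * ∫ ω, ⟪v, x ω⟫ ^ 2 ∂P
      = q * ∫ ω, deriv ℓ 0 ^ 2 * ⟪v, x ω⟫ ^ 2 ∂P := by rw [mul_assoc, integral_const_mul]
    _ ≤ q * ∫ ω, (F 1 ω + F (-1) ω) ∂P := by
      refine mul_le_mul_of_nonneg_left (integral_mono ?_ ((hFint 1).add (hFint (-1))) hpointwise)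
        hq.le
      simpa only [F, zero_mul] using hFint 0
    _ = q * ∫ ω, F 1 ω ∂P + q * ∫ ω, F (-1) ω ∂P := by
      rw [integral_add (hFint 1) (hFint (-1)), mul_add]
    _ ≤ ∫ ω in {ω | y ω = 1}, F 1 ω ∂P + ∫ ω in {ω | y ω = -1}, F (-1) ω ∂P := by
      gcongr
      · exact mul_integral_le_setIntegral_of_le_condExp_indicator hx.comap_le
          (hFmx 1).stronglyMeasurable (hFint 1) (.of_forall fun ω => by positivity)
          (hy (measurableSet_singleton 1)) h1
      · exact mul_integral_le_setIntegral_of_le_condExp_indicator hx.comap_le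
          (hFmx (-1)).stronglyMeasurable (hFint (-1)) (.of_forall fun ω => by positivity)
          (hy (measurableSet_singleton (-1))) h2
    _ = ∫ ω, F (y ω) ω ∂P :=
      (integral_eq_setIntegral_add_setIntegral_of_two_valued hy (by norm_num) hy1
        (hFint 1) (hFint (-1))).symm
end

section
/- Let M, N be positive definite d×d real matrices with M = N + x xᵀ for some x ∈ ℝᵈ. Then xᵀ M⁻¹ x ≤ log det M − log det N. -/
open Matrix

/-! By the matrix determinant lemma, `det N = det (M - x xᵀ) = det M * (1 - xᵀ M⁻¹ x)`, so
`xᵀ M⁻¹ x = 1 - det N / det M`, and `1 - t⁻¹ ≤ log t` at `t = det M / det N` gives the bound. -/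

theorem Matrix.det_add_vecMulVec {m R : Type*} [Fintype m] [DecidableEq m] [CommRing R]
    {A : Matrix m m R} (hA : IsUnit A.det) (u v : m → R) :
    (A + vecMulVec u v).det = A.det * (1 + v ⬝ᵥ (A⁻¹ *ᵥ u)) := by
  have hfactor : A + vecMulVec u v =
      A * (1 + replicateCol Unit (A⁻¹ *ᵥ u) * replicateRow Unit v) := by
    rw [← vecMulVec_eq, mul_add, mul_one, mul_vecMulVec, mulVec_mulVec, mul_nonsing_inv _ hA,
      one_mulVec]
  rw [hfactor, det_mul, det_one_add_replicateCol_mul_replicateRow]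

theorem Matrix.dotProduct_inv_mulVec_eq_one_sub_det_div {m R : Type*} [Fintype m]
    [DecidableEq m] [Field R] {M : Matrix m m R} (hM : M.det ≠ 0) (x : m → R) :
    x ⬝ᵥ (M⁻¹ *ᵥ x) = 1 - (M - vecMulVec x x).det / M.det := by
  have hdet := det_add_vecMulVec (isUnit_iff_ne_zero.mpr hM) (-x) x
  rw [neg_vecMulVec, ← sub_eq_add_neg, mulVec_neg, dotProduct_neg] at hdet
  rw [hdet, mul_div_cancel_left₀ _ hM]
  ring

theorem logdet_potential_bound
    {d : ℕ} (M N : Matrix (Fin d) (Fin d) ℝ) (x : Fin d → ℝ)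
    (hN : N.PosDef) (hM : M.PosDef) (hMN : M = N + Matrix.vecMulVec x x) :
    x ⬝ᵥ (M⁻¹ *ᵥ x) ≤ Real.log M.det - Real.log N.det := by
  have hNM : N = M - vecMulVec x x := by rw [hMN, add_sub_cancel_right]
  rw [dotProduct_inv_mulVec_eq_one_sub_det_div hM.det_pos.ne', ← hNM,
    ← Real.log_div hM.det_pos.ne' hN.det_pos.ne', ← inv_div]
  exact Real.one_sub_inv_le_log_of_pos (div_pos hM.det_pos hN.det_pos)
end

section
/- Let a > 0, n a positive integer, d a positive integer, and x₁, …, x_n ∈ ℝᵈ with ‖x_i‖ ≤ 1 for all i. Let M₀ = a·I and M_n = a·I + ∑_{i=1}^n x_i x_iᵀ. Then log det(M_n) − log det(M₀) ≤ d · log(1 + n/(a d)). -/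
/-!
The eigenvalues `λⱼ` of `a • 1 + ∑ xᵢ xᵢᵀ` are positive with sum equal to its trace, which is at
most `a d + n` since `‖xᵢ‖ ≤ 1`. By concavity of `log`, `log det = ∑ log λⱼ` is at most
`d · log (trace / d) ≤ d · log (a (1 + n / (a d)))`, and `log det (a • 1) = d · log a`.
-/

open Matrix Finset

theorem Real.sum_log_le_card_mul_log_mean {ι : Type*} (s : Finset ι) {z : ι → ℝ}
    (hz : ∀ i ∈ s, 0 < z i) :
    ∑ i ∈ s, Real.log (z i) ≤ #s * Real.log ((∑ i ∈ s, z i) / #s) := by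
  rcases s.eq_empty_or_nonempty with rfl | hs
  · simp
  have hcard : (0 : ℝ) < #s := by exact_mod_cast hs.card_pos
  have jensen := strictConcaveOn_log_Ioi.concaveOn.le_map_sum (t := s) (p := z)
    (w := fun _ => (#s : ℝ)⁻¹) (fun _ _ => by positivity) (by simp [hcard.ne']) hz
  simp only [smul_eq_mul, ← mul_sum] at jensen
  calc ∑ i ∈ s, Real.log (z i) = #s * ((#s : ℝ)⁻¹ * ∑ i ∈ s, Real.log (z i)) := by
        field_simp
    _ ≤ #s * Real.log ((∑ i ∈ s, z i) / #s) := by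
        rw [div_eq_inv_mul]
        exact mul_le_mul_of_nonneg_left jensen hcard.le

theorem Matrix.PosDef.log_det_le_card_mul_log_trace_div {m : Type*} [Fintype m] [DecidableEq m]
    {M : Matrix m m ℝ} (hM : M.PosDef) :
    Real.log M.det ≤ Fintype.card m * Real.log (M.trace / Fintype.card m) := by
  rw [hM.isHermitian.det_eq_prod_eigenvalues, hM.isHermitian.trace_eq_sum_eigenvalues]
  simp only [RCLike.ofReal_real_eq_id, id_eq]
  rw [Real.log_prod fun i _ => (hM.eigenvalues_pos i).ne']
  exact Real.sum_log_le_card_mul_log_mean univ fun i _ => hM.eigenvalues_pos i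

theorem logdet_growth_bound_general
    {d n : ℕ} (hd : 0 < d) (a : ℝ) (ha : 0 < a)
    (x : Fin n → Fin d → ℝ) (hx : ∀ i, ∑ j, (x i j) ^ 2 ≤ 1) :
    Real.log (Matrix.det (a • (1 : Matrix (Fin d) (Fin d) ℝ)
        + ∑ i, Matrix.vecMulVec (x i) (x i)))
      - Real.log (Matrix.det (a • (1 : Matrix (Fin d) (Fin d) ℝ)))
      ≤ d * Real.log (1 + n / (a * d)) := by
  set S : Matrix (Fin d) (Fin d) ℝ := ∑ i, vecMulVec (x i) (x i)
  have hS : S.PosSemidef :=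
    posSemidef_sum _ fun i _ => by simpa using posSemidef_vecMulVec_self_star (x i)
  have hM : (a • 1 + S).PosDef := (PosDef.one.smul ha).add_posSemidef hS
  have hdR : (0 : ℝ) < d := by exact_mod_cast hd
  have htrace_S : S.trace ≤ n := by
    calc S.trace = ∑ i, ∑ j, x i j ^ 2 := by simp [S, trace_sum, dotProduct, sq]
      _ ≤ ∑ _ : Fin n, 1 := sum_le_sum fun i _ => hx i
      _ = n := by simp
  have htrace_M : (a • 1 + S).trace / d ≤ a * (1 + n / (a * d)) := by
    rw [trace_add, trace_smul, trace_one, Fintype.card_fin, smul_eq_mul, div_le_iff₀ hdR]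
    field_simp
    linarith
  have hdet_aI : Real.log (a • (1 : Matrix (Fin d) (Fin d) ℝ)).det = d * Real.log a := by
    rw [det_smul, det_one, mul_one, Fintype.card_fin, Real.log_pow]
  calc Real.log (a • 1 + S).det - Real.log (a • (1 : Matrix (Fin d) (Fin d) ℝ)).det
      ≤ d * Real.log ((a • 1 + S).trace / d) - d * Real.log a := by
        rw [hdet_aI]
        simpa using hM.log_det_le_card_mul_log_trace_div
    _ ≤ d * Real.log (a * (1 + n / (a * d))) - d * Real.log a := by
        have : Nonempty (Fin d) := ⟨⟨0, hd⟩⟩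
        have : 0 < (a • 1 + S).trace / d := div_pos hM.trace_pos hdR
        gcongr
    _ = d * Real.log (1 + n / (a * d)) := by
        rw [Real.log_mul ha.ne' (by positivity)]
        ring

theorem logdet_growth_bound
    {d n : ℕ} (hd : 0 < d) (hn : 0 < n) (a : ℝ) (ha : 0 < a)
    (x : Fin n → Fin d → ℝ) (hx : ∀ i, ∑ j, (x i j) ^ 2 ≤ 1) :
    Real.log (Matrix.det (a • (1 : Matrix (Fin d) (Fin d) ℝ)
        + ∑ i, Matrix.vecMulVec (x i) (x i)))
      - Real.log (Matrix.det (a • (1 : Matrix (Fin d) (Fin d) ℝ)))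
      ≤ d * Real.log (1 + n / (a * d)) :=
  logdet_growth_bound_general hd a ha x hx
end
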